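/- arXiv:1710.07658 — 3 statements merged into one kernel-verified Lean document; each statement's English description precedes it below -/
import Mathlib

section
/- Suppose P(t) ∈ ℤ[t] is a monic polynomial all of whose roots lie on the unit circle in ℂ, and P is not constant. Then P is a product of cyclotomic polynomials (Kronecker's theorem). -/
/-!
A monic polynomial with all its complex roots in the closed unit disk has Mahler measure `1`.
For an integer polynomial of Mahler measure `1` not divisible by `X`, Kronecker's lemma (an
algebraic integer whose conjugates all lie in the closed unit disk is a root of unity) gives a
cyclotomic factor `Φₙ`; since `M(Φₙ) = 1` and `M` is multiplicative, the cofactor again has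
Mahler measure `1`, and induction on the degree finishes the proof.
-/

open Polynomial

namespace Polynomial

open Int

theorem mahlerMeasure_eq_one_of_monic_of_forall_mem_roots_norm_le_one {p : ℂ[X]} (hp : p.Monic)
    (h : ∀ z ∈ p.roots, ‖z‖ ≤ 1) : p.mahlerMeasure = 1 := by
  rw [mahlerMeasure_eq_leadingCoeff_mul_prod_roots, hp.leadingCoeff, norm_one, one_mul]
  exact Multiset.prod_eq_one fun x hx ↦ by
    obtain ⟨z, hz, rfl⟩ := Multiset.mem_map.mp hx
    exact max_eq_left (h z hz)

theorem exists_eq_prod_cyclotomic_of_mahlerMeasure_eq_one {p : ℤ[X]} (hp : p.Monic)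
    (hM : (p.map (castRingHom ℂ)).mahlerMeasure = 1) (hX : ¬ X ∣ p) :
    ∃ s : Multiset ℕ, (∀ d ∈ s, 0 < d) ∧ p = (s.map (fun d => cyclotomic d ℤ)).prod := by
  induction hdeg : p.natDegree using Nat.strong_induction_on generalizing p with
  | _ N ih =>
    rcases eq_or_ne p.natDegree 0 with h0 | h0
    · exact ⟨0, by simp, by simp [hp.natDegree_eq_zero.mp h0]⟩
    obtain ⟨n, hn, q, rfl⟩ := cyclotomic_dvd_of_mahlerMeasure_eq_one hM hX
      (by rwa [degree_eq_natDegree hp.ne_zero, Nat.cast_ne_zero])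
    have hq : q.Monic := (cyclotomic.monic n ℤ).of_mul_monic_left hp
    have hqM : (q.map (castRingHom ℂ)).mahlerMeasure = 1 := by
      rwa [Polynomial.map_mul, mahlerMeasure_mul, ← algebraMap_int_eq,
        cyclotomic_mahlerMeasure_eq_one, one_mul] at hM
    have hqX : ¬ X ∣ q := fun h ↦ hX (dvd_mul_of_dvd_right h _)
    have hqdeg : q.natDegree < N := by
      rw [← hdeg, (cyclotomic.monic n ℤ).natDegree_mul hq, natDegree_cyclotomic]
      have := Nat.totient_pos.mpr hn
      omega
    obtain ⟨s, hs, rfl⟩ := ih _ hqdeg hq hqM hqX rfl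
    refine ⟨n ::ₘ s, fun d hd ↦ ?_, by rw [Multiset.map_cons, Multiset.prod_cons]⟩
    rcases Multiset.mem_cons.mp hd with rfl | hd
    exacts [hn, hs d hd]

end Polynomial

theorem stmt3_general (P : Polynomial ℤ) (hm : P.Monic)
    (hroots : ∀ z : ℂ, (P.map (Int.castRingHom ℂ)).IsRoot z → ‖z‖ = 1) :
    ∃ s : Multiset ℕ, (∀ d ∈ s, 0 < d) ∧
      P = (s.map (fun d => Polynomial.cyclotomic d ℤ)).prod := by
  have hM : (P.map (Int.castRingHom ℂ)).mahlerMeasure = 1 :=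
    mahlerMeasure_eq_one_of_monic_of_forall_mem_roots_norm_le_one (hm.map _)
      fun z hz ↦ (hroots z (isRoot_of_mem_roots hz)).le
  have hX : ¬ X ∣ P := fun h ↦ by
    have h0 := hroots 0 (by rw [IsRoot, ← coeff_zero_eq_eval_zero, coeff_map, X_dvd_iff.mp h,
      map_zero])
    simp at h0
  exact exists_eq_prod_cyclotomic_of_mahlerMeasure_eq_one hm hM hX

/-- Kronecker's theorem: a non-constant monic integer polynomial all of whose
complex roots lie on the unit circle is a product of cyclotomic polynomials. -/
theorem stmt3 (P : Polynomial ℤ) (hm : P.Monic) (hd : 0 < P.natDegree)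
    (hroots : ∀ z : ℂ, (P.map (Int.castRingHom ℂ)).IsRoot z → ‖z‖ = 1) :
    ∃ s : Multiset ℕ, (∀ d ∈ s, 0 < d) ∧
      P = (s.map (fun d => Polynomial.cyclotomic d ℤ)).prod :=
  stmt3_general P hm hroots
end

section
/- Let i, j ≥ 0 with i + j > 0 and consider the polynomial P(t) = Φ_6(t)^i · Φ_10(t)^j, where Φ_6(t) = t^2 - t + 1 and Φ_10(t) = t^4 - t^3 + t^2 - t + 1. If all nonzero coefficients of P are ±1, then i + j = 1. -/
/-! The coefficient of `t` in `Φ₆ ^ i * Φ₁₀ ^ j` is `-(i + j)`, since both factors are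
`1 - t + O(t²)`; it lies in `{-1, 0, 1}` only if `i + j ≤ 1`. -/

open Polynomial

namespace Polynomial

variable {R : Type*} [CommSemiring R]

theorem coeff_one_pow (p : R[X]) (n : ℕ) :
    (p ^ n).coeff 1 = n * p.coeff 1 * p.coeff 0 ^ (n - 1) := by
  rw [← coeff_coe, coe_pow, PowerSeries.coeff_one_pow, coeff_coe, constantCoeff_coe]

theorem coeff_one_pow_mul_pow {p q : R[X]} (hp : p.coeff 0 = 1) (hq : q.coeff 0 = 1)
    (m n : ℕ) : (p ^ m * q ^ n).coeff 1 = m * p.coeff 1 + n * q.coeff 1 := by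
  rw [coeff_zero_eq_eval_zero] at hp hq
  simp [mul_coeff_one, coeff_one_pow, coeff_zero_eq_eval_zero, hp, hq, add_comm]

theorem cyclotomic_ten (R : Type*) [Ring R] :
    cyclotomic 10 R = X ^ 4 - X ^ 3 + X ^ 2 - X + 1 := by
  suffices cyclotomic 10 ℤ = X ^ 4 - X ^ 3 + X ^ 2 - X + 1 by
    rw [← map_cyclotomic_int, this]
    simp
  have hΦ₅ : cyclotomic 5 ℤ = X ^ 4 + X ^ 3 + X ^ 2 + X + 1 := by
    have : Fact (Nat.Prime 5) := ⟨by norm_num⟩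
    simp only [cyclotomic_prime, Finset.sum_range_succ, Finset.range_one, Finset.sum_singleton,
      pow_zero, pow_one]
    ring
  apply mul_right_cancel₀ (cyclotomic_ne_zero 5 ℤ)
  rw [show 10 = 5 * 2 by rfl,
    ← cyclotomic_expand_eq_cyclotomic_mul Nat.prime_two (by norm_num1), hΦ₅]
  simp only [map_add, map_pow, expand_X, map_one]
  ring

end Polynomial

/-- If `i + j > 0` and all nonzero coefficients of `Φ₆(t)^i * Φ₁₀(t)^j` are `±1`,
then `i + j = 1`. -/
theorem stmt4 (i j : ℕ) (hij : 0 < i + j)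
    (h : ∀ n : ℕ,
      ((Polynomial.cyclotomic 6 ℤ) ^ i * (Polynomial.cyclotomic 10 ℤ) ^ j).coeff n
        ∈ ({-1, 0, 1} : Set ℤ)) :
    i + j = 1 := by
  have hΦ₆ : (cyclotomic 6 ℤ).coeff 1 = -1 := by simp [coeff_X, coeff_one]
  have hΦ₁₀ : (cyclotomic 10 ℤ).coeff 1 = -1 := by simp [cyclotomic_ten, coeff_X, coeff_one]
  have hcoeff : ((cyclotomic 6 ℤ) ^ i * (cyclotomic 10 ℤ) ^ j).coeff 1 = -(i + j : ℤ) := by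
    rw [coeff_one_pow_mul_pow (cyclotomic_coeff_zero ℤ (by norm_num))
      (cyclotomic_coeff_zero ℤ (by norm_num)), hΦ₆, hΦ₁₀]
    ring
  have h₁ := h 1
  rw [hcoeff] at h₁
  simp only [Set.mem_insert_iff, Set.mem_singleton_iff] at h₁
  omega
end

section
/- Let k ≥ 1 and m ≥ 3 be integers, and define G(θ) = k·cos((2m+1)θ/2) - (k-1)·cos((2m-1)θ/2). Then G has a root θ in the open interval (2π/3, π). -/
/-!
At the nodes `θⱼ = 2πj/(2m+1)` the first cosine of `G` equals `cos (jπ) = (-1)ʲ` and the second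
equals `(-1)ʲ cos θⱼ`, so `G θⱼ = (-1)ʲ (k - (k-1) cos θⱼ)` has sign `(-1)ʲ`. Hence `G` changes sign
on `(θₘ₋₁, θₘ) ⊆ (2π/3, π)` once `m ≥ 4`; for `m = 3` one uses `G (2π/3) = 1/2` instead of `θ₂`.
-/

open Real Set

theorem exists_mem_Ioo_eq_zero_of_mul_neg {f : ℝ → ℝ} {a b : ℝ} (hab : a ≤ b)
    (hf : ContinuousOn f (Icc a b)) (hsign : f a * f b < 0) : ∃ x ∈ Ioo a b, f x = 0 := by
  rcases mul_neg_iff.mp hsign with ⟨ha, hb⟩ | ⟨ha, hb⟩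
  · exact intermediate_value_Ioo' hab hf ⟨hb, ha⟩
  · exact intermediate_value_Ioo hab hf ⟨ha, hb⟩

theorem sub_sub_one_mul_cos_pos {k : ℝ} (hk : 1 / 2 < k) (x : ℝ) : 0 < k - (k - 1) * cos x := by
  rcases le_or_gt 1 k with hk₁ | hk₁
  · nlinarith [mul_nonneg (sub_nonneg.mpr hk₁) (sub_nonneg.mpr (cos_le_one x))]
  · nlinarith [mul_nonneg (sub_nonneg.mpr hk₁.le) (neg_le_iff_add_nonneg.mp (neg_one_le_cos x))]

noncomputable def cosCombo (k n θ : ℝ) : ℝ :=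
  k * cos ((2 * n + 1) * θ / 2) - (k - 1) * cos ((2 * n - 1) * θ / 2)

namespace cosCombo

variable {k n : ℝ}

theorem continuous : Continuous (cosCombo k n) := by
  unfold cosCombo
  fun_prop

theorem apply_node (hn : 2 * n + 1 ≠ 0) (j : ℕ) :
    cosCombo k n (2 * π * j / (2 * n + 1)) =
      (-1) ^ j * (k - (k - 1) * cos (2 * π * j / (2 * n + 1))) := by
  have h₁ : (2 * n + 1) * (2 * π * j / (2 * n + 1)) / 2 = j * π - 0 := by
    field_simp
    ring
  have h₂ : (2 * n - 1) * (2 * π * j / (2 * n + 1)) / 2 = j * π - 2 * π * j / (2 * n + 1) := by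
    field_simp
    ring
  rw [cosCombo, h₁, h₂, cos_nat_mul_pi_sub, cos_nat_mul_pi_sub, cos_zero]
  ring

theorem neg_one_pow_mul_apply_node_pos (hk : 1 / 2 < k) (hn : 2 * n + 1 ≠ 0) (j : ℕ) :
    0 < (-1) ^ j * cosCombo k n (2 * π * j / (2 * n + 1)) := by
  rw [apply_node hn, ← mul_assoc, ← mul_pow, neg_one_mul, neg_neg, one_pow, one_mul]
  exact sub_sub_one_mul_cos_pos hk _

theorem apply_node_mul_apply_node_succ_neg (hk : 1 / 2 < k) (hn : 2 * n + 1 ≠ 0) (j : ℕ) :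
    cosCombo k n (2 * π * j / (2 * n + 1)) *
        cosCombo k n (2 * π * (j + 1 : ℕ) / (2 * n + 1)) < 0 := by
  have h₀ := neg_one_pow_mul_apply_node_pos hk hn j
  have h₁ := neg_one_pow_mul_apply_node_pos hk hn (j + 1)
  have hsq : ((-1 : ℝ) ^ j) ^ 2 = 1 := by rw [← pow_mul, pow_mul', neg_one_sq, one_pow]
  rw [pow_succ] at h₁
  nlinarith [mul_pos h₀ h₁]

theorem apply_two_pi_div_three (k : ℝ) : cosCombo k 3 (2 * π / 3) = 1 / 2 := by
  have h₁ : (2 * 3 + 1) * (2 * π / 3) / 2 = π / 3 + 2 * π := by ring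
  have h₂ : (2 * 3 - 1) * (2 * π / 3) / 2 = -(π / 3) + 2 * π := by ring
  rw [cosCombo, h₁, h₂, cos_add_two_pi, cos_add_two_pi, cos_neg, cos_pi_div_three]
  ring

theorem exists_sign_change_before_node (hk : 1 / 2 < k) {m : ℕ} (hm : 3 ≤ m) :
    ∃ a, 2 * π / 3 ≤ a ∧ a < 2 * π * m / (2 * m + 1) ∧
      cosCombo k m a * cosCombo k m (2 * π * m / (2 * m + 1)) < 0 := by
  have hn : 2 * (m : ℝ) + 1 ≠ 0 := by positivity
  rcases hm.eq_or_lt with rfl | hm₄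
  · refine ⟨2 * π / 3, le_rfl, ?_, ?_⟩
    · rw [div_lt_div_iff₀ (by norm_num) (by positivity)]
      norm_num
      nlinarith [pi_pos]
    · have h₃ := neg_one_pow_mul_apply_node_pos hk hn 3
      rw [Nat.cast_ofNat, apply_two_pi_div_three]
      norm_num at h₃ ⊢
      linarith
  · obtain ⟨j, rfl⟩ : ∃ j, m = j + 1 := ⟨m - 1, by omega⟩
    refine ⟨2 * π * j / (2 * (j + 1 : ℕ) + 1), ?_, ?_, apply_node_mul_apply_node_succ_neg hk hn j⟩
    · have hj : (3 : ℝ) ≤ j := by exact_mod_cast Nat.le_of_lt_succ hm₄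
      rw [div_le_div_iff₀ (by norm_num) (by positivity)]
      push_cast
      nlinarith [pi_pos]
    · gcongr
      exact_mod_cast j.lt_succ_self

end cosCombo

/-- For integers `k ≥ 1` and `m ≥ 3`, the function
`G(θ) = k·cos((2m+1)θ/2) - (k-1)·cos((2m-1)θ/2)` has a root in `(2π/3, π)`. -/
theorem stmt8 (k m : ℕ) (hk : 1 ≤ k) (hm : 3 ≤ m) :
    ∃ θ ∈ Set.Ioo (2 * Real.pi / 3) Real.pi,
      (k : ℝ) * Real.cos ((2 * (m : ℝ) + 1) * θ / 2) -
        ((k : ℝ) - 1) * Real.cos ((2 * (m : ℝ) - 1) * θ / 2) = 0 := by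
  have hk' : (1 / 2 : ℝ) < k := by
    linarith [show (1 : ℝ) ≤ k by exact_mod_cast hk]
  have hb : 2 * π * m / (2 * m + 1) < π := by
    rw [div_lt_iff₀ (by positivity)]
    nlinarith [pi_pos]
  obtain ⟨a, ha, hab, hsign⟩ := cosCombo.exists_sign_change_before_node hk' hm
  obtain ⟨θ, hθ, hG⟩ :=
    exists_mem_Ioo_eq_zero_of_mul_neg hab.le cosCombo.continuous.continuousOn hsign
  exact ⟨θ, ⟨ha.trans_lt hθ.1, hθ.2.trans hb⟩, hG⟩
end
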